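/- arXiv:2102.03976 — 5 statements merged into one kernel-verified Lean document; each statement's English description precedes it below -/
import Mathlib

section
/- (Non-normality criterion) Let G be a finite group, S ⊆ G with 1 ∉ S, and let H, K be subgroups with 1 < H ≤ K < G and H normal in G. Assume S \ K is a union of cosets of H in G, and there exist x ∉ K and y ∈ H with y^x ≠ y⁻¹. Then the Cayley digraph Cay(G,S) is not normal, i.e., R(G) is not a normal subgroup of Aut(Cay(G,S)). -/
/-!
Let `f` fix `K` pointwise and act as right multiplication by `y` outside `K`. Since `y ∈ H ⊴ G`,
`f v * (f u)⁻¹` differs from `v * u⁻¹` by a left factor from `H`, and this factor is trivial when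
`v * u⁻¹ ∈ K`; as `S \ K` is a union of `H`-cosets, `f` is an automorphism of `Cay(G,S)`.
If `f` normalised `R(G)`, then `f * R(x) * f⁻¹ = R(b)` would force `b = x * y` (evaluate at `1`)
and `x⁻¹ * y⁻¹ * x = y` (evaluate at `x⁻¹ * y⁻¹`), contradicting `y^x ≠ y⁻¹`.
-/

/-- The arc relation of the Cayley digraph `Cay(G,S)`. -/
def cayArc {G : Type*} [Group G] (S : Set G) (u v : G) : Prop := ∃ s ∈ S, v = s * u

/-- The automorphism group of the Cayley digraph `Cay(G,S)`. -/
def cayAut {G : Type*} [Group G] (S : Set G) : Subgroup (Equiv.Perm G) where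
  carrier := {f | ∀ u v : G, cayArc S u v ↔ cayArc S (f u) (f v)}
  one_mem' := by intro u v; rfl
  mul_mem' := by intro f g hf hg u v; exact (hg u v).trans (hf (g u) (g v))
  inv_mem' := by intro f hf u v; simpa using (hf (f⁻¹ u) (f⁻¹ v)).symm

/-- The right regular representation `R(G)` as a subgroup of the symmetric group on `G`. -/
def rmulSub (G : Type*) [Group G] : Subgroup (Equiv.Perm G) where
  carrier := Set.range (fun g : G => Equiv.mulRight g)
  one_mem' := ⟨1, by ext x; simp⟩
  mul_mem' := by rintro _ _ ⟨a, rfl⟩ ⟨b, rfl⟩; exact ⟨b * a, by ext x; simp [mul_assoc]⟩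
  inv_mem' := by rintro _ ⟨a, rfl⟩; exact ⟨a⁻¹, by ext x; simp⟩

lemma cayArc_iff {G : Type*} [Group G] {S : Set G} {u v : G} :
    cayArc S u v ↔ v * u⁻¹ ∈ S :=
  ⟨by rintro ⟨s, hs, rfl⟩; simpa using hs, fun h => ⟨v * u⁻¹, h, by group⟩⟩

lemma mem_cayAut_iff {G : Type*} [Group G] {S : Set G} {f : Equiv.Perm G} :
    f ∈ cayAut S ↔ ∀ u v : G, v * u⁻¹ ∈ S ↔ f v * (f u)⁻¹ ∈ S := by
  simp only [cayAut, Subgroup.mem_mk, Submonoid.mem_mk, Subsemigroup.mem_mk, Set.mem_ofPred_eq,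
    cayArc_iff]

lemma apply_mul_eq_of_conj_eq_mulRight {G : Type*} [Group G] {f : Equiv.Perm G} {x b : G}
    (h : f * Equiv.mulRight x * f⁻¹ = Equiv.mulRight b) (g : G) : f (g * x) = f g * b := by
  simpa using congrArg (fun e : Equiv.Perm G => e (f g)) h

lemma mem_iff_mul_mem_of_notMem {G : Type*} [Group G] {S : Set G} {H K : Subgroup G} (hHK : H ≤ K)
    (hcosets : ∀ s ∈ S, s ∉ K → ∀ h ∈ H, h * s ∈ S) {a h : G} (ha : a ∉ K) (hh : h ∈ H) :
    a ∈ S ↔ h * a ∈ S := by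
  refine ⟨fun haS => hcosets a haS ha h hh, fun hhaS => ?_⟩
  have hhaK : h * a ∉ K := by rwa [K.mul_mem_cancel_left (hHK hh)]
  simpa using hcosets (h * a) hhaS hhaK h⁻¹ (H.inv_mem hh)

section MulRightOff

variable {G : Type*} [Group G] (K : Subgroup G) [DecidablePred (· ∈ K)]

def mulRightOff {y : G} (hy : y ∈ K) : Equiv.Perm G where
  toFun g := g * if g ∈ K then 1 else y
  invFun g := g * if g ∈ K then 1 else y⁻¹
  left_inv g := by by_cases hg : g ∈ K <;> simp [hg, K.mul_mem_cancel_right hy]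
  right_inv g := by by_cases hg : g ∈ K <;> simp [hg, K.mul_mem_cancel_right (K.inv_mem hy)]

variable {K} {y : G} (hy : y ∈ K)

lemma mulRightOff_apply (g : G) : mulRightOff K hy g = g * if g ∈ K then 1 else y := rfl

lemma mulRightOff_apply_of_mem {g : G} (hg : g ∈ K) : mulRightOff K hy g = g := by
  simp [mulRightOff_apply, hg]

lemma mulRightOff_apply_of_notMem {g : G} (hg : g ∉ K) : mulRightOff K hy g = g * y := by
  simp [mulRightOff_apply, hg]

lemma mulRightOff_mem_cayAut {S : Set G} {H : Subgroup G} [H.Normal] (hHK : H ≤ K)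
    (hcosets : ∀ s ∈ S, s ∉ K → ∀ h ∈ H, h * s ∈ S) (hyH : y ∈ H) :
    mulRightOff K (hHK hyH) ∈ cayAut S := by
  rw [mem_cayAut_iff]
  intro u v
  set c : G → G := fun g => if g ∈ K then 1 else y
  have hc : ∀ g, c g ∈ H := fun g => by by_cases hg : g ∈ K <;> simp [c, hg, hyH]
  have hdiff : mulRightOff K (hHK hyH) v * (mulRightOff K (hHK hyH) u)⁻¹
      = (v * (c v * (c u)⁻¹) * v⁻¹) * (v * u⁻¹) := by
    simp only [mulRightOff_apply, c]; group
  by_cases hvu : v * u⁻¹ ∈ K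
  · have hsame : c v = c u := by
      have : v ∈ K ↔ u ∈ K := by simpa using K.mul_mem_cancel_left hvu (y := u)
      simp [c, this]
    rw [hdiff, hsame]; simp
  · rw [hdiff]
    exact mem_iff_mul_mem_of_notMem hHK hcosets hvu
      (Subgroup.Normal.conj_mem ‹_› _ (H.mul_mem (hc v) (H.inv_mem (hc u))) v)

lemma mulRightOff_conj_mulRight_notMem_rmulSub {H : Subgroup G} [hHn : H.Normal] (hHK : H ≤ K)
    {x : G} (hxK : x ∉ K) (hyH : y ∈ H) (hxy : x⁻¹ * y * x ≠ y⁻¹) :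
    mulRightOff K (hHK hyH) * Equiv.mulRight x * (mulRightOff K (hHK hyH))⁻¹ ∉ rmulSub G := by
  rintro ⟨b, hb⟩
  have hmul := apply_mul_eq_of_conj_eq_mulRight hb.symm
  have hb : x * y = b := by
    simpa [mulRightOff_apply_of_mem _ K.one_mem, mulRightOff_apply_of_notMem _ hxK] using hmul 1
  have hconj : x⁻¹ * y⁻¹ * x ∈ K := by
    simpa using hHK (hHn.conj_mem _ (H.inv_mem hyH) x⁻¹)
  have hxy' : x⁻¹ * y⁻¹ ∉ K := by
    rwa [← K.mul_mem_cancel_right (hHK hyH), inv_mul_cancel_right, inv_mem_iff]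
  have key := hmul (x⁻¹ * y⁻¹)
  rw [mulRightOff_apply_of_mem _ hconj, mulRightOff_apply_of_notMem _ hxy', ← hb] at key
  exact hxy (by simpa [mul_assoc] using congrArg (·⁻¹) key)

end MulRightOff

theorem stmt11_general {G : Type*} [Group G] (S : Set G)
    (H K : Subgroup G) (hHK : H ≤ K) (hHn : H.Normal)
    (hcosets : ∀ s ∈ S, s ∉ K → ∀ h ∈ H, h * s ∈ S ∧ h * s ∉ K)
    (hx : ∃ x : G, x ∉ K ∧ ∃ y ∈ H, x⁻¹ * y * x ≠ y⁻¹) :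
    ¬ (∀ f ∈ cayAut S, ∀ r ∈ rmulSub G, f * r * f⁻¹ ∈ rmulSub G) := by
  classical
  intro hnorm
  obtain ⟨x, hxK, y, hyH, hxy⟩ := hx
  have hf := mulRightOff_mem_cayAut hHK (fun s hs hsK h hh => (hcosets s hs hsK h hh).1) hyH
  exact mulRightOff_conj_mulRight_notMem_rmulSub hHK hxK hyH hxy
    (hnorm _ hf _ ⟨x, rfl⟩)

/-- Non-normality criterion: let `G` be a finite group, `S ⊆ G` with `1 ∉ S`, and
`H ≤ K` subgroups with `1 < H`, `K < G`, `H ⊴ G`. If `S \ K` is a union of cosets of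
`H`, and there are `x ∉ K` and `y ∈ H` with `y^x ≠ y⁻¹`, then `Cay(G,S)` is not
normal: `R(G)` is not a normal subgroup of `Aut(Cay(G,S))`. -/
theorem stmt11 {G : Type*} [Group G] [Fintype G] (S : Set G) (hS : (1 : G) ∉ S)
    (H K : Subgroup G) (hH : H ≠ ⊥) (hHK : H ≤ K) (hK : K ≠ ⊤) (hHn : H.Normal)
    (hcosets : ∀ s ∈ S, s ∉ K → ∀ h ∈ H, h * s ∈ S ∧ h * s ∉ K)
    (hx : ∃ x : G, x ∉ K ∧ ∃ y ∈ H, x⁻¹ * y * x ≠ y⁻¹) :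
    ¬ (∀ f ∈ cayAut S, ∀ r ∈ rmulSub G, f * r * f⁻¹ ∈ rmulSub G) :=
  stmt11_general S H K hHK hHn hcosets hx
end

section
/- Let G be a finite group, S ⊆ G, H ⊴ G, K a subgroup with H ≤ K < G, and suppose S \ K is a union of cosets of H in G. For any u, v ∈ G with Ku ≠ Kv and any k₁, k₂ ∈ K, the induced bipartite sub-digraph of Cay(G,S) between the cosets Hk₁u and Hk₂v is either empty (no arcs) or complete (every arc from Hk₁u to Hk₂v is present). -/
/-!
An arc from `H k₁ u` to `H k₂ v` has label `s = h₂ k₂ v u⁻¹ k₁⁻¹ h₁⁻¹`, which lies outside `K`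
because `Ku ≠ Kv`, so only `S \ K` matters. Since `H` is normal, every such label lies in the
single coset `H k₂ v u⁻¹ k₁⁻¹`, and `S \ K` is a union of `H`-cosets: either it contains that
coset, and all arcs are present, or it misses it, and none is.
-/

section

variable {G : Type*} [Group G]

theorem cayArc_iff_mul_inv_mem {S : Set G} {x y : G} : cayArc S x y ↔ y * x⁻¹ ∈ S :=
  ⟨fun ⟨s, hs, hy⟩ => by simpa [hy] using hs, fun h => ⟨y * x⁻¹, h, by group⟩⟩

theorem cayArc_iff_cayArc_diff {S : Set G} {K : Subgroup G} {x y : G} (hxy : y * x⁻¹ ∉ K) :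
    cayArc S x y ↔ cayArc (S \ K) x y := by
  simp only [cayArc_iff_mul_inv_mem, Set.mem_sdiff, SetLike.mem_coe]
  tauto

theorem Subgroup.mul_mul_mul_inv_mem_iff (K : Subgroup G) {a b : G} (ha : a ∈ K) (hb : b ∈ K)
    (u v : G) : a * v * (b * u)⁻¹ ∈ K ↔ u * v⁻¹ ∈ K := by
  rw [show a * v * (b * u)⁻¹ = a * (u * v⁻¹)⁻¹ * b⁻¹ by group,
    K.mul_mem_cancel_right (K.inv_mem hb), K.mul_mem_cancel_left ha, K.inv_mem_iff]

theorem QuotientGroup.preimage_image_mk_eq_of_mul_mem {H : Subgroup G} [H.Normal] {T : Set G}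
    (hT : ∀ s ∈ T, ∀ h ∈ H, h * s ∈ T) : ((↑) : G → G ⧸ H) ⁻¹' (((↑) : G → G ⧸ H) '' T) = T := by
  refine Set.Subset.antisymm (fun t ⟨s, hs, hst⟩ => ?_) (Set.subset_preimage_image _ _)
  have hts : t * s⁻¹ ∈ H := by
    rw [← QuotientGroup.eq_one_iff, QuotientGroup.mk_mul, QuotientGroup.mk_inv, hst, mul_inv_cancel]
  simpa using hT s hs _ hts

theorem cayArc_preimage_mk_iff {H : Subgroup G} [H.Normal] (U : Set (G ⧸ H)) {h₁ h₂ : G}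
    (hh₁ : h₁ ∈ H) (hh₂ : h₂ ∈ H) (x y : G) :
    cayArc (((↑) : G → G ⧸ H) ⁻¹' U) (h₁ * x) (h₂ * y) ↔ ((y * x⁻¹ : G) : G ⧸ H) ∈ U := by
  rw [cayArc_iff_mul_inv_mem, Set.mem_preimage]
  simp [(QuotientGroup.eq_one_iff _).mpr hh₁, (QuotientGroup.eq_one_iff _).mpr hh₂]

end

theorem stmt12_general {G : Type*} [Group G] (S : Set G)
    (H K : Subgroup G) (hHK : H ≤ K) (hHn : H.Normal)
    (hcosets : ∀ s ∈ S, s ∉ K → ∀ h ∈ H, h * s ∈ S ∧ h * s ∉ K)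
    (u v : G) (huv : u * v⁻¹ ∉ K) (k₁ k₂ : G) (hk₁ : k₁ ∈ K) (hk₂ : k₂ ∈ K) :
    (∀ h₁ ∈ H, ∀ h₂ ∈ H, ¬ cayArc S (h₁ * k₁ * u) (h₂ * k₂ * v)) ∨
    (∀ h₁ ∈ H, ∀ h₂ ∈ H, cayArc S (h₁ * k₁ * u) (h₂ * k₂ * v)) := by
  have hT : ((↑) : G → G ⧸ H) ⁻¹' (((↑) : G → G ⧸ H) '' (S \ K)) = S \ K :=
    QuotientGroup.preimage_image_mk_eq_of_mul_mem fun s hs h hh => hcosets s hs.1 hs.2 h hh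
  have key : ∀ h₁ ∈ H, ∀ h₂ ∈ H, cayArc S (h₁ * k₁ * u) (h₂ * k₂ * v) ↔
      ((k₂ * v * (k₁ * u)⁻¹ : G) : G ⧸ H) ∈ ((↑) : G → G ⧸ H) '' (S \ K) := by
    intro h₁ hh₁ h₂ hh₂
    have hlabel : h₂ * k₂ * v * (h₁ * k₁ * u)⁻¹ ∉ K := by
      rwa [K.mul_mul_mul_inv_mem_iff (K.mul_mem (hHK hh₂) hk₂) (K.mul_mem (hHK hh₁) hk₁)]
    have := cayArc_preimage_mk_iff ((↑) '' (S \ K)) hh₁ hh₂ (k₁ * u) (k₂ * v)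
    rwa [hT, ← mul_assoc, ← mul_assoc, ← cayArc_iff_cayArc_diff hlabel] at this
  by_cases hmem : ((k₂ * v * (k₁ * u)⁻¹ : G) : G ⧸ H) ∈ ((↑) : G → G ⧸ H) '' (S \ K)
  · exact .inr fun h₁ hh₁ h₂ hh₂ => (key h₁ hh₁ h₂ hh₂).mpr hmem
  · exact .inl fun h₁ hh₁ h₂ hh₂ => mt (key h₁ hh₁ h₂ hh₂).mp hmem

/-- Let `G` be a finite group, `S ⊆ G`, `H ⊴ G`, `H ≤ K < G`, and suppose `S \ K` is a
union of cosets of `H`. For `u, v ∈ G` with `Ku ≠ Kv` (i.e. `u * v⁻¹ ∉ K`) and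
`k₁, k₂ ∈ K`, the induced bipartite sub-digraph of `Cay(G,S)` between the cosets
`H k₁ u` and `H k₂ v` is either empty or complete. -/
theorem stmt12 {G : Type*} [Group G] [Fintype G] (S : Set G)
    (H K : Subgroup G) (hHK : H ≤ K) (hK : K ≠ ⊤) (hHn : H.Normal)
    (hcosets : ∀ s ∈ S, s ∉ K → ∀ h ∈ H, h * s ∈ S ∧ h * s ∉ K)
    (u v : G) (huv : u * v⁻¹ ∉ K) (k₁ k₂ : G) (hk₁ : k₁ ∈ K) (hk₂ : k₂ ∈ K) :
    (∀ h₁ ∈ H, ∀ h₂ ∈ H, ¬ cayArc S (h₁ * k₁ * u) (h₂ * k₂ * v)) ∨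
    (∀ h₁ ∈ H, ∀ h₂ ∈ H, cayArc S (h₁ * k₁ * u) (h₂ * k₂ * v)) :=
  stmt12_general S H K hHK hHn hcosets u v huv k₁ k₂ hk₁ hk₂
end

section
/- Let C_{2^s m} = ⟨a⟩ × ⟨b⟩ with o(a) = 2^s, o(b) = m, s ≥ 3, and m odd. In Aut(C_{2^s m}), let β be the automorphism induced by a ↦ a^{2^{s-1}+1}, b ↦ b. Then in the holomorph Hol(C_{2^s m}), the element g = R(ab)β satisfies g² = R(a^{2^{s-1}+2} b²) and g has order 2^s m. -/
/-!
For an involutive automorphism `β` of a group, `(R(w)β)² = R(w · w^β)`; here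
`w = ab` and `w · w^β = a^{2^{s-1}+2} b²`. For `s ≥ 3` we have `2^{s-1} + 2 = 2 · (odd)`, so this
element has order `lcm(2^{s-1}, m) = 2^{s-1} m`, which is even; and an element whose square has
even order `n` has order `2n`.
-/

section Holomorph

variable {G : Type*} [AddGroup G]

theorem orderOf_addRight (v : G) : orderOf (Equiv.addRight v) = addOrderOf v := by
  rw [← orderOf_ofAdd_eq_addOrderOf, orderOf_eq_orderOf_iff]
  intro n
  rw [Equiv.nsmul_addRight, ← ofAdd_nsmul, ofAdd_eq_one]
  exact ⟨fun h => by simpa using congr($h 0), fun h => by simp [h]⟩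

theorem sq_perm_mul_addRight (β : G ≃+ G) (hβ : Function.Involutive β) (w : G) :
    (β.toEquiv * Equiv.addRight w) ^ 2 = Equiv.addRight (w + β w) := by
  ext p
  simp [sq, map_add, hβ _, add_assoc]

end Holomorph

theorem orderOf_eq_two_mul_orderOf_sq {M : Type*} [Monoid M] {g : M}
    (h : Even (orderOf (g ^ 2))) :
    orderOf g = 2 * orderOf (g ^ 2) := by
  have h2 : 2 ∣ orderOf g := (even_iff_two_dvd.mp h).trans (orderOf_pow_dvd 2)
  rw [orderOf_pow_of_dvd two_ne_zero h2, Nat.mul_div_cancel' h2]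

namespace ZMod

theorem two_pow_pred_add_one_mul_self {s : ℕ} (hs : 2 ≤ s) :
    ((2 ^ (s - 1) + 1 : ℕ) : ZMod (2 ^ s)) * ((2 ^ (s - 1) + 1 : ℕ) : ZMod (2 ^ s)) = 1 := by
  obtain ⟨n, rfl⟩ : ∃ n, s = n + 2 := ⟨s - 2, by omega⟩
  rw [← Nat.cast_mul, show (2 ^ (n + 2 - 1) + 1) * (2 ^ (n + 2 - 1) + 1)
    = 2 ^ (n + 2) * (2 ^ n + 1) + 1 by rw [show n + 2 - 1 = n + 1 by omega]; ring]
  simp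

theorem addOrderOf_two_pow_pred_add_two {s : ℕ} (hs : 3 ≤ s) :
    addOrderOf ((2 ^ (s - 1) + 2 : ℕ) : ZMod (2 ^ s)) = 2 ^ (s - 1) := by
  obtain ⟨n, rfl⟩ : ∃ n, s = n + 3 := ⟨s - 3, by omega⟩
  have hodd : Nat.Coprime (2 ^ (n + 2)) (2 ^ (n + 1) + 1) :=
    Nat.Coprime.pow_left _ (Nat.coprime_two_left.mpr (by simp [Nat.even_pow]))
  rw [addOrderOf_coe _ (by positivity), show n + 3 - 1 = n + 2 by omega,
    show 2 ^ (n + 2) + 2 = 2 * (2 ^ (n + 1) + 1) by ring, pow_succ', Nat.gcd_mul_left,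
    hodd.gcd_eq_one, mul_one, Nat.mul_div_cancel_left _ two_pos]

theorem addOrderOf_two_of_odd {m : ℕ} (hm : Odd m) : addOrderOf (2 : ZMod m) = m := by
  rw [← Nat.cast_two, addOrderOf_coe _ (by rintro rfl; simp at hm),
    (Nat.coprime_two_right.mpr hm).gcd_eq_one, Nat.div_one]

end ZMod

def AddEquiv.mulFstOfMulSelfEqOne {R H : Type*} [Semiring R] [AddMonoid H] (k : R)
    (hk : k * k = 1) : (R × H) ≃+ (R × H) where
  toFun p := (k * p.1, p.2)
  invFun p := (k * p.1, p.2)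
  left_inv p := by simp [← mul_assoc, hk]
  right_inv p := by simp [← mul_assoc, hk]
  map_add' p q := by simp [mul_add]

-- `C_{2^s m}` is `ZMod (2^s) × ZMod m` with `a = (1, 0)`, `b = (0, 1)`; the permutation
-- `β * Equiv.addRight w` translates by `w` first, as `R(w)β` does.
theorem stmt13_general (s m : ℕ) (hs : 3 ≤ s) (hm : Odd m) :
    ∃ β : Equiv.Perm (ZMod (2 ^ s) × ZMod m),
      (∀ p q : ZMod (2 ^ s) × ZMod m, β (p + q) = β p + β q) ∧
      (∀ p : ZMod (2 ^ s) × ZMod m,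
        β p = (((2 ^ (s - 1) + 1 : ℕ) : ZMod (2 ^ s)) * p.1, p.2)) ∧
      (β * Equiv.addRight ((1 : ZMod (2 ^ s)), (1 : ZMod m))) ^ 2 =
        Equiv.addRight (((2 ^ (s - 1) + 2 : ℕ) : ZMod (2 ^ s)), (2 : ZMod m)) ∧
      orderOf (β * Equiv.addRight ((1 : ZMod (2 ^ s)), (1 : ZMod m))) = 2 ^ s * m := by
  have hk := ZMod.two_pow_pred_add_one_mul_self (by omega : 2 ≤ s)
  let β : (ZMod (2 ^ s) × ZMod m) ≃+ _ := AddEquiv.mulFstOfMulSelfEqOne _ hk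
  have hβ : Function.Involutive β := β.left_inv
  have hsq : (β.toEquiv * Equiv.addRight (1, 1)) ^ 2 =
      Equiv.addRight (((2 ^ (s - 1) + 2 : ℕ) : ZMod (2 ^ s)), (2 : ZMod m)) := by
    rw [sq_perm_mul_addRight β hβ]
    congr 1
    simp only [β, AddEquiv.mulFstOfMulSelfEqOne, AddEquiv.coe_mk, Equiv.coe_fn_mk, Prod.mk_add_mk]
    ext <;> push_cast <;> ring
  have hord_sq : orderOf ((β.toEquiv * Equiv.addRight (1, 1)) ^ 2) = 2 ^ (s - 1) * m := by
    rw [hsq, orderOf_addRight, Prod.addOrderOf, ZMod.addOrderOf_two_pow_pred_add_two hs,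
      ZMod.addOrderOf_two_of_odd hm, ((Nat.coprime_two_left.mpr hm).pow_left _).lcm_eq_mul]
  have h_even : Even (2 ^ (s - 1) * m) := (Nat.even_pow.mpr ⟨even_two, by omega⟩).mul_right m
  refine ⟨β.toEquiv, map_add β, fun p => rfl, hsq, ?_⟩
  rw [orderOf_eq_two_mul_orderOf_sq (hord_sq ▸ h_even), hord_sq, ← mul_assoc, ← pow_succ',
    Nat.sub_add_cancel (by omega)]

/-- Let `C_{2^s m} = ⟨a⟩ × ⟨b⟩` with `o(a) = 2^s`, `o(b) = m`, `s ≥ 3`, `m` odd,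
realized additively as `ZMod (2^s) × ZMod m` with `a = (1,0)`, `b = (0,1)`.
Let `β` be the automorphism `a ↦ a^{2^{s-1}+1}`, `b ↦ b`, i.e. the (bijective,
additive) map `(x, y) ↦ ((2^{s-1}+1) x, y)`. Then in the holomorph, the element
`g = R(ab)β` (first translate by `ab = (1,1)`, then apply `β`) satisfies
`g² = R(a^{2^{s-1}+2} b²)` and `g` has order `2^s m`. -/
theorem stmt13 (s m : ℕ) (hs : 3 ≤ s) (hm : Odd m) (hm0 : 0 < m) :
    ∃ β : Equiv.Perm (ZMod (2 ^ s) × ZMod m),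
      (∀ p q : ZMod (2 ^ s) × ZMod m, β (p + q) = β p + β q) ∧
      (∀ p : ZMod (2 ^ s) × ZMod m,
        β p = (((2 ^ (s - 1) + 1 : ℕ) : ZMod (2 ^ s)) * p.1, p.2)) ∧
      (β * Equiv.addRight ((1 : ZMod (2 ^ s)), (1 : ZMod m))) ^ 2 =
        Equiv.addRight (((2 ^ (s - 1) + 2 : ℕ) : ZMod (2 ^ s)), (2 : ZMod m)) ∧
      orderOf (β * Equiv.addRight ((1 : ZMod (2 ^ s)), (1 : ZMod m))) = 2 ^ s * m :=
  stmt13_general s m hs hm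
end

section
/- Let C_{2^s m} = ⟨a⟩ × ⟨b⟩ with o(a) = 2^s, o(b) = m, s ≥ 3, m odd. With g = R(ab)β as above (β: a ↦ a^{2^{s-1}+1}, b ↦ b), the cyclic group H = ⟨g⟩ acts regularly on the underlying set of C_{2^s m}, and H ≠ R(C_{2^s m}). -/
/-- The group of right translations `R(G)` of an additive group, as a subgroup of the
symmetric group on `G`. -/
def raddSub (G : Type*) [AddGroup G] : Subgroup (Equiv.Perm G) where
  carrier := Set.range (fun g : G => Equiv.addRight g)
  one_mem' := ⟨0, by ext x; simp⟩
  mul_mem' := by rintro _ _ ⟨a, rfl⟩ ⟨b, rfl⟩; exact ⟨b + a, by ext x; simp [add_assoc]⟩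
  inv_mem' := by rintro _ ⟨a, rfl⟩; exact ⟨-a, by ext x; simp⟩

/-!
Write `C = ZMod (2^s) × ZMod m` additively and `c = 2^(s-1) + 1`. Since `c² = 1` in
`ZMod (2^s)`, `β` is an involution, so `g = β ∘ (· + (1, 1))` squares to the translation by
`w = (1 + c, 2)`, which has order `2^(s-1) m` because `1 + c = 2 (2^(s-2) + 1)` with
`2^(s-2) + 1` odd. As `c` is odd, `g` flips the parity of the first coordinate, so odd powers
of `g` have no fixed points, while `g^(2j)` fixes a point iff `j • w = 0`. Thus the stabiliser
of every point in `⟨g⟩` is trivial and `|⟨g⟩| = 2^s m = |C|`, i.e. `⟨g⟩` is regular.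
It is not `R(C)`, because `g` is a translation only if `β = 1`.
-/

namespace Equiv.Perm

variable {X A : Type*} [AddCommGroup A] {g : Perm X}

theorem map_zpow_apply {φ : X → A} {a : A} (hφ : ∀ x, φ (g x) = φ x + a) (k : ℤ) (x : X) :
    φ ((g ^ k) x) = φ x + k • a := by
  induction k using Int.induction_on generalizing x with
  | zero => simp
  | succ k ih => rw [zpow_add_one, mul_apply, ih, hφ, add_zsmul, one_zsmul]; abel
  | pred k ih =>
    have hinv : φ (g⁻¹ x) = φ x - a := by
      rw [eq_sub_iff_add_eq, ← hφ, ← mul_apply, mul_inv_cancel, one_apply]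
    rw [zpow_sub_one, mul_apply, ih, hinv, sub_zsmul, one_zsmul]; abel

theorem addOrderOf_dvd_of_zpow_apply_eq_self {φ : X → A} {a : A}
    (hφ : ∀ x, φ (g x) = φ x + a) {k : ℤ} {x : X} (hx : (g ^ k) x = x) :
    (addOrderOf a : ℤ) ∣ k := by
  have h := map_zpow_apply hφ k x
  rw [hx, left_eq_add] at h
  exact addOrderOf_dvd_iff_zsmul_eq_zero.2 h

theorem zpow_apply_eq_self_iff_of_sq_eq_addRight {G : Type*} [AddGroup G] {g : Perm G} {w : G}
    (hsq : g ^ 2 = Equiv.addRight w) {φ : G → ZMod 2} (hφ : ∀ x, φ (g x) = φ x + 1)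
    (k : ℤ) (x : G) : (g ^ k) x = x ↔ ((2 * addOrderOf w : ℕ) : ℤ) ∣ k := by
  have hzpow : ∀ j : ℤ, g ^ (2 * j) = Equiv.addRight (j • w) := fun j => by
    rw [zpow_mul, zpow_ofNat, hsq, zsmul_addRight]
  constructor
  · intro hx
    obtain ⟨j, rfl⟩ : (2 : ℤ) ∣ k := by
      simpa using addOrderOf_dvd_of_zpow_apply_eq_self hφ hx
    rw [hzpow, coe_addRight, add_eq_left, ← addOrderOf_dvd_iff_zsmul_eq_zero] at hx
    push_cast
    exact mul_dvd_mul_left 2 hx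
  · rintro ⟨q, rfl⟩
    rw [Nat.cast_mul, Nat.cast_ofNat, mul_assoc, hzpow, mul_zsmul', natCast_zsmul,
      addOrderOf_nsmul_eq_zero, zsmul_zero]
    exact add_zero x

theorem existsUnique_zpowers_apply_eq [Finite X]
    (hg : ∀ (k : ℤ) (x : X), (g ^ k) x = x ↔ (Nat.card X : ℤ) ∣ k) (u v : X) :
    ∃! h : Subgroup.zpowers g, (h : Perm X) u = v := by
  have hpow : ∀ k : ℤ, g ^ k = 1 ↔ (Nat.card X : ℤ) ∣ k := fun k =>
    ⟨fun h => (hg k u).1 (by rw [h, one_apply]), fun h => Equiv.ext fun x => (hg k x).2 h⟩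
  have horder : orderOf g = Nat.card X := by
    refine Nat.dvd_antisymm ?_ ?_
    · exact_mod_cast orderOf_dvd_iff_zpow_eq_one.2 ((hpow _).2 dvd_rfl)
    · exact_mod_cast (hpow _).1 (orderOf_dvd_iff_zpow_eq_one.1 dvd_rfl)
  have hinj : Function.Injective fun h : Subgroup.zpowers g => (h : Perm X) u := by
    rintro ⟨_, i, rfl⟩ ⟨_, j, rfl⟩ hij
    have hfix : (g ^ (i - j)) u = u := by
      rw [show g ^ (i - j) = (g ^ j)⁻¹ * g ^ i by group, mul_apply,
        show (g ^ i) u = (g ^ j) u from hij, ← mul_apply, inv_mul_cancel, one_apply]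
    exact Subtype.ext (mul_inv_eq_one.1 (zpow_sub g i j ▸ (hpow _).2 ((hg _ u).1 hfix)))
  exact (hinj.bijective_of_nat_card_le (by rw [Nat.card_zpowers, horder])).existsUnique v

end Equiv.Perm

theorem AddEquiv.apply_eq_self_of_toEquiv_mul_addRight_mem_raddSub {G : Type*} [AddGroup G]
    {σ : G ≃+ G} {t : G} (h : σ.toEquiv * Equiv.addRight t ∈ raddSub G) (y : G) :
    σ y = y := by
  obtain ⟨a, ha⟩ := h
  have hy : y + a = σ y + σ t := by simpa using congr($ha y)
  have h0 : a = σ t := by simpa using congr($ha 0)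
  rwa [h0, add_left_inj, eq_comm] at hy

theorem AddEquiv.toEquiv_mul_addRight_sq {G : Type*} [AddGroup G] {σ : G ≃+ G}
    (hσ : ∀ x, σ (σ x) = x) (t : G) :
    (σ.toEquiv * Equiv.addRight t) ^ 2 = Equiv.addRight (t + σ t) := by
  ext x
  simp [sq, hσ, add_assoc]

namespace ZMod

theorem natCast_two_pow_add_one_mul_self {k : ℕ} (hk : 1 ≤ k) :
    ((2 ^ k + 1 : ℕ) : ZMod (2 ^ (k + 1))) * ((2 ^ k + 1 : ℕ) : ZMod (2 ^ (k + 1))) = 1 := by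
  obtain ⟨j, rfl⟩ : ∃ j, k = j + 1 := ⟨k - 1, by omega⟩
  have h0 : (2 : ZMod (2 ^ (j + 2))) ^ (j + 2) = 0 := by exact_mod_cast natCast_self (2 ^ (j + 2))
  push_cast
  linear_combination (2 ^ j + 1 : ZMod (2 ^ (j + 2))) * h0

theorem natCast_two_pow_add_one_ne_one (k : ℕ) :
    ((2 ^ k + 1 : ℕ) : ZMod (2 ^ (k + 1))) ≠ 1 := by
  intro h
  have h0 : ((2 ^ k : ℕ) : ZMod (2 ^ (k + 1))) = 0 := by
    push_cast at h ⊢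
    linear_combination h
  rw [natCast_eq_zero_iff, Nat.pow_dvd_pow_iff_le_right one_lt_two] at h0
  omega

theorem addOrderOf_natCast_two_pow_add_two {k : ℕ} (hk : 2 ≤ k) :
    addOrderOf ((2 ^ k + 2 : ℕ) : ZMod (2 ^ (k + 1))) = 2 ^ k := by
  obtain ⟨j, rfl⟩ : ∃ j, k = j + 1 := ⟨k - 1, by omega⟩
  have hodd : Nat.Coprime (2 ^ (j + 1)) (2 ^ j + 1) :=
    Nat.Coprime.pow_left _ <| Nat.coprime_two_left.2 <|
      Even.add_one ((Nat.even_pow' (by omega)).2 even_two)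
  rw [addOrderOf_coe _ (by positivity), show 2 ^ (j + 1 + 1) = 2 * 2 ^ (j + 1) by ring,
    show 2 ^ (j + 1) + 2 = 2 * (2 ^ j + 1) by ring, Nat.gcd_mul_left, hodd, mul_one,
    Nat.mul_div_cancel_left _ two_pos]

end ZMod

section scaleFst

variable (k m : ℕ) (hk : 1 ≤ k)

/- `scaleFst` is the paper's `β` and `twistedTranslation` its `g = R(ab)β`, written for
`s = k + 1` so that `2^(s-1)` needs no truncated subtraction. -/
def scaleFst : (ZMod (2 ^ (k + 1)) × ZMod m) ≃+ (ZMod (2 ^ (k + 1)) × ZMod m) :=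
  (DistribMulAction.toAddEquiv (ZMod (2 ^ (k + 1)))
    (Units.mkOfMulEqOne _ _ (ZMod.natCast_two_pow_add_one_mul_self hk))).prodCongr
    (AddEquiv.refl (ZMod m))

variable {k m}

theorem scaleFst_apply (p : ZMod (2 ^ (k + 1)) × ZMod m) :
    scaleFst k m hk p = (((2 ^ k + 1 : ℕ) : ZMod (2 ^ (k + 1))) * p.1, p.2) :=
  rfl

theorem scaleFst_scaleFst (p : ZMod (2 ^ (k + 1)) × ZMod m) :
    scaleFst k m hk (scaleFst k m hk p) = p := by
  simp only [scaleFst_apply, ← mul_assoc, ZMod.natCast_two_pow_add_one_mul_self hk, one_mul]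

def twistedTranslation : Equiv.Perm (ZMod (2 ^ (k + 1)) × ZMod m) :=
  (scaleFst k m hk).toEquiv * Equiv.addRight ((1, 1) : ZMod (2 ^ (k + 1)) × ZMod m)

theorem twistedTranslation_sq :
    twistedTranslation hk ^ 2 =
      Equiv.addRight (((2 ^ k + 2 : ℕ) : ZMod (2 ^ (k + 1))), (2 : ZMod m)) := by
  rw [twistedTranslation, AddEquiv.toEquiv_mul_addRight_sq (scaleFst_scaleFst hk), scaleFst_apply]
  congr 1
  ext <;> simp only [Prod.fst_add, Prod.snd_add, mul_one] <;> push_cast <;> ring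

theorem castHom_twistedTranslation_apply_fst (p : ZMod (2 ^ (k + 1)) × ZMod m) :
    ZMod.castHom (dvd_pow_self 2 k.succ_ne_zero) (ZMod 2) (twistedTranslation hk p).1 =
      ZMod.castHom (dvd_pow_self 2 k.succ_ne_zero) (ZMod 2) p.1 + 1 := by
  have hc : ((2 ^ k + 1 : ℕ) : ZMod 2) = 1 := by
    rw [Nat.cast_add, Nat.cast_pow, Nat.cast_ofNat, show (2 : ZMod 2) = 0 from rfl,
      zero_pow (by omega), Nat.cast_one, zero_add]
  change ZMod.castHom _ (ZMod 2) (((2 ^ k + 1 : ℕ) : ZMod (2 ^ (k + 1))) * (p.1 + 1)) = _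
  rw [map_mul, map_add, map_one, map_natCast, hc, one_mul]

end scaleFst

theorem twistedTranslation_zpow_apply_eq_self_iff {k m : ℕ} (hk : 2 ≤ k) (hm : Odd m) (n : ℤ)
    (x : ZMod (2 ^ (k + 1)) × ZMod m) :
    (twistedTranslation (m := m) (one_le_two.trans hk) ^ n) x = x ↔
      (Nat.card (ZMod (2 ^ (k + 1)) × ZMod m) : ℤ) ∣ n := by
  rw [Equiv.Perm.zpow_apply_eq_self_iff_of_sq_eq_addRight (twistedTranslation_sq _)
      (φ := fun p => ZMod.castHom (dvd_pow_self 2 k.succ_ne_zero) (ZMod 2) p.1)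
      (castHom_twistedTranslation_apply_fst _),
    Prod.addOrderOf, ZMod.addOrderOf_natCast_two_pow_add_two hk, ZMod.addOrderOf_two_of_odd hm,
    Nat.Coprime.lcm_eq_mul (Nat.Coprime.pow_left _ (Nat.coprime_two_left.2 hm)), Nat.card_prod,
    Nat.card_zmod, Nat.card_zmod, pow_succ]
  ring_nf

theorem stmt14_general (s m : ℕ) (hs : 3 ≤ s) (hm : Odd m) :
    ∃ β : Equiv.Perm (ZMod (2 ^ s) × ZMod m),
      (∀ p q : ZMod (2 ^ s) × ZMod m, β (p + q) = β p + β q) ∧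
      (∀ p : ZMod (2 ^ s) × ZMod m,
        β p = (((2 ^ (s - 1) + 1 : ℕ) : ZMod (2 ^ s)) * p.1, p.2)) ∧
      (∀ u v : ZMod (2 ^ s) × ZMod m,
        ∃! h : Subgroup.zpowers (β * Equiv.addRight ((1 : ZMod (2 ^ s)), (1 : ZMod m))),
          (h : Equiv.Perm (ZMod (2 ^ s) × ZMod m)) u = v) ∧
      Subgroup.zpowers (β * Equiv.addRight ((1 : ZMod (2 ^ s)), (1 : ZMod m))) ≠
        raddSub (ZMod (2 ^ s) × ZMod m) := by
  obtain ⟨k, rfl⟩ : ∃ k, s = k + 1 := ⟨s - 1, by omega⟩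
  have : NeZero m := ⟨hm.pos.ne'⟩
  have hk : 1 ≤ k := by omega
  refine ⟨(scaleFst k m hk).toEquiv, map_add (scaleFst k m hk),
    fun p => by rw [Nat.add_sub_cancel]; rfl,
    Equiv.Perm.existsUnique_zpowers_apply_eq
      (twistedTranslation_zpow_apply_eq_self_iff (by omega) hm),
    fun h => ?_⟩
  have hβ := AddEquiv.apply_eq_self_of_toEquiv_mul_addRight_mem_raddSub
    (h ▸ Subgroup.mem_zpowers _) ((1, 0) : ZMod (2 ^ (k + 1)) × ZMod m)
  rw [scaleFst_apply] at hβ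
  exact ZMod.natCast_two_pow_add_one_ne_one k (by simpa only [mul_one] using congr($hβ.1))

/-- Let `C_{2^s m} = ⟨a⟩ × ⟨b⟩` with `o(a) = 2^s`, `o(b) = m`, `s ≥ 3`, `m` odd,
realized additively as `ZMod (2^s) × ZMod m`. With `β : (x,y) ↦ ((2^{s-1}+1) x, y)`
and `g = R(ab)β`, the cyclic subgroup `H = ⟨g⟩` of the holomorph acts regularly on the
underlying set, and `H ≠ R(C_{2^s m})`. -/
theorem stmt14 (s m : ℕ) (hs : 3 ≤ s) (hm : Odd m) (hm0 : 0 < m) :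
    ∃ β : Equiv.Perm (ZMod (2 ^ s) × ZMod m),
      (∀ p q : ZMod (2 ^ s) × ZMod m, β (p + q) = β p + β q) ∧
      (∀ p : ZMod (2 ^ s) × ZMod m,
        β p = (((2 ^ (s - 1) + 1 : ℕ) : ZMod (2 ^ s)) * p.1, p.2)) ∧
      (∀ u v : ZMod (2 ^ s) × ZMod m,
        ∃! h : Subgroup.zpowers (β * Equiv.addRight ((1 : ZMod (2 ^ s)), (1 : ZMod m))),
          (h : Equiv.Perm (ZMod (2 ^ s) × ZMod m)) u = v) ∧
      Subgroup.zpowers (β * Equiv.addRight ((1 : ZMod (2 ^ s)), (1 : ZMod m))) ≠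
        raddSub (ZMod (2 ^ s) × ZMod m) :=
  stmt14_general s m hs hm
end

section
/- Let G = ⟨a⟩ be cyclic of order 2^r with r ≥ 3, and S = {a, a², a^{2^{r-1}+1}}. Then the Cayley digraph Cay(G,S) is not a CI-digraph: there exists T ⊆ G with Cay(G,S) ≅ Cay(G,T) as digraphs but T ≠ S^σ for every σ ∈ Aut(G). -/
/-!
Let `m = 2^(r-1)` be the element of order two and `T = {1, m + 1, m + 2}`. The involution of
`ℤ/2^r` adding `m` to the residues `≡ 2, 3 (mod 4)` is an isomorphism `Cay(G, S) ≅ Cay(G, T)`: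
as `m ≡ 0 (mod 4)`, it sends an arc of length `s` to one of length `s` or `s + m`, and of length
exactly `s + m` when `s ≡ 2 (mod 4)`, since such an arc joins a moved and a fixed vertex.
No automorphism maps `S` onto `T`, because `S` contains `1` together with `1 + 1`, whereas no
`t ∈ T` has `t + t ∈ T`.
-/

open Function

def cayArcAdd {G : Type*} [AddGroup G] (S : Set G) (u v : G) : Prop := ∃ s ∈ S, v = s + u

theorem cayArcAdd_iff_of_involutive {G : Type*} [AddGroup G] {S T : Set G} {f : G → G}
    (hf : Involutive f) (hST : ∀ s ∈ S, ∀ x, ∃ t ∈ T, f (s + x) = t + f x)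
    (hTS : ∀ t ∈ T, ∀ x, ∃ s ∈ S, f (t + x) = s + f x) (u v : G) :
    cayArcAdd S u v ↔ cayArcAdd T (f u) (f v) := by
  constructor
  · rintro ⟨s, hs, rfl⟩
    exact hST s hs u
  · rintro ⟨t, ht, hv⟩
    obtain ⟨s, hs, he⟩ := hTS t ht (f u)
    refine ⟨s, hs, ?_⟩
    rw [← hf v, hv, he, hf u]

theorem image_ne_of_forall_add_self_notMem {G H F : Type*} [Add G] [Add H] [FunLike F G H]
    [AddHomClass F G H] (σ : F) {S : Set G} {T : Set H} {a : G} (ha : a ∈ S) (haa : a + a ∈ S)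
    (hT : ∀ t ∈ T, t + t ∉ T) : σ '' S ≠ T := by
  rintro rfl
  exact hT (σ a) ⟨a, ha, rfl⟩ ⟨a + a, haa, map_add σ a a⟩

section Twist

variable {G : Type*} [AddCommGroup G]

def twist (P : G → Prop) [DecidablePred P] (m x : G) : G := if P x then x + m else x

variable {P : G → Prop} [DecidablePred P] {m : G}

theorem twist_involutive (hm : m + m = 0) (hP : ∀ x, P (x + m) ↔ P x) :
    Involutive (twist P m) := by
  intro x
  by_cases hx : P x
  · simp [twist, hx, hP, add_assoc, hm]
  · simp [twist, hx]

theorem twist_add_eq_or (hm : m + m = 0) (s x : G) :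
    twist P m (s + x) = s + twist P m x ∨ twist P m (s + x) = s + m + twist P m x := by
  unfold twist
  split_ifs
  · left; abel
  · right; abel
  · right; rw [add_add_add_comm, hm, add_zero]
  · left; rfl

theorem twist_add_of_forall_iff_not (hm : m + m = 0) {s : G} (hs : ∀ x, P (s + x) ↔ ¬P x)
    (x : G) : twist P m (s + x) = s + m + twist P m x := by
  by_cases hx : P x
  · simp only [twist, hs, hx, not_true, if_false, if_true]
    rw [add_add_add_comm, hm, add_zero]
  · simp only [twist, hs, hx, not_false_eq_true, if_false, if_true]
    abel

end Twist

namespace CayleyNonCI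

variable (k : ℕ)

def toZMod4 : ZMod (2 ^ (k + 3)) →+* ZMod 4 :=
  ZMod.castHom ⟨2 ^ (k + 1), by ring⟩ _

def half : ZMod (2 ^ (k + 3)) := 2 ^ (k + 2)

def S : Set (ZMod (2 ^ (k + 3))) := {1, 2, half k + 1}

def T : Set (ZMod (2 ^ (k + 3))) := {1, half k + 1, half k + 2}

theorem half_add_half : half k + half k = 0 := by
  rw [half, ← two_mul, ← pow_succ']
  exact_mod_cast ZMod.natCast_self (2 ^ (k + 3))

theorem half_ne_zero : half k ≠ 0 := by
  have h : half k = ((2 ^ (k + 2) : ℕ) : ZMod (2 ^ (k + 3))) := by simp [half]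
  rw [h, Ne, ZMod.natCast_eq_zero_iff, Nat.pow_dvd_pow_iff_le_right (by norm_num)]
  omega

theorem toZMod4_half : toZMod4 k (half k) = 0 := by
  rw [half, map_pow, map_ofNat, pow_add, show (2 : ZMod 4) ^ 2 = 0 from rfl, mul_zero]

def twistMod4 : ZMod (2 ^ (k + 3)) → ZMod (2 ^ (k + 3)) :=
  twist (fun x => toZMod4 k x = 2 ∨ toZMod4 k x = 3) (half k)

theorem twistMod4_involutive : Involutive (twistMod4 k) :=
  twist_involutive (half_add_half k) fun x => by simp [toZMod4_half]

theorem twistMod4_add_eq_or (s x : ZMod (2 ^ (k + 3))) :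
    twistMod4 k (s + x) = s + twistMod4 k x ∨
      twistMod4 k (s + x) = s + half k + twistMod4 k x :=
  twist_add_eq_or (half_add_half k) s x

theorem twistMod4_add_of_toZMod4_eq_two {s : ZMod (2 ^ (k + 3))} (hs : toZMod4 k s = 2)
    (x : ZMod (2 ^ (k + 3))) : twistMod4 k (s + x) = s + half k + twistMod4 k x := by
  refine twist_add_of_forall_iff_not (half_add_half k) (fun y => ?_) x
  rw [map_add, hs]
  generalize toZMod4 k y = z
  revert z
  decide

theorem exists_twistMod4_add_S : ∀ s ∈ S k, ∀ x, ∃ t ∈ T k,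
    twistMod4 k (s + x) = t + twistMod4 k x := by
  rintro s (rfl | rfl | rfl) x
  · rcases twistMod4_add_eq_or k 1 x with h | h
    · exact ⟨1, by simp [T], h⟩
    · exact ⟨half k + 1, by simp [T], by rw [h, add_comm 1]⟩
  · refine ⟨half k + 2, by simp [T], ?_⟩
    rw [twistMod4_add_of_toZMod4_eq_two k (map_ofNat _ 2), add_comm 2]
  · rcases twistMod4_add_eq_or k (half k + 1) x with h | h
    · exact ⟨half k + 1, by simp [T], h⟩
    · exact ⟨1, by simp [T], by rw [h]; linear_combination half_add_half k⟩

theorem exists_twistMod4_add_T : ∀ t ∈ T k, ∀ x, ∃ s ∈ S k,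
    twistMod4 k (t + x) = s + twistMod4 k x := by
  rintro t (rfl | rfl | rfl) x
  · rcases twistMod4_add_eq_or k 1 x with h | h
    · exact ⟨1, by simp [S], h⟩
    · exact ⟨half k + 1, by simp [S], by rw [h, add_comm 1]⟩
  · rcases twistMod4_add_eq_or k (half k + 1) x with h | h
    · exact ⟨half k + 1, by simp [S], h⟩
    · exact ⟨1, by simp [S], by rw [h]; linear_combination half_add_half k⟩
  · refine ⟨2, by simp [S], ?_⟩
    rw [twistMod4_add_of_toZMod4_eq_two k (by simp [toZMod4_half, map_ofNat])]
    linear_combination half_add_half k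

theorem add_self_notMem_T : ∀ t ∈ T k, t + t ∉ T k := by
  have ne_of_mod4 {a b : ZMod (2 ^ (k + 3))} (h : toZMod4 k a ≠ toZMod4 k b) : a ≠ b :=
    fun hab => h (congrArg _ hab)
  have two_notMem : (2 : ZMod (2 ^ (k + 3))) ∉ T k := by
    simp only [T, Set.mem_insert_iff, Set.mem_singleton_iff, not_or]
    refine ⟨ne_of_mod4 ?_, ne_of_mod4 ?_, fun h => half_ne_zero k (by linear_combination -h)⟩ <;>
      simp only [map_ofNat, map_add, map_one, toZMod4_half, zero_add] <;> decide
  have four_notMem : (4 : ZMod (2 ^ (k + 3))) ∉ T k := by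
    simp only [T, Set.mem_insert_iff, Set.mem_singleton_iff, not_or]
    refine ⟨ne_of_mod4 ?_, ne_of_mod4 ?_, ne_of_mod4 ?_⟩ <;>
      simp only [map_ofNat, map_add, map_one, toZMod4_half, zero_add] <;> decide
  rintro t (rfl | rfl | rfl)
  · rwa [one_add_one_eq_two]
  · rwa [show half k + 1 + (half k + 1) = 2 by linear_combination half_add_half k]
  · rwa [show half k + 2 + (half k + 2) = 4 by linear_combination half_add_half k]

end CayleyNonCI

open CayleyNonCI in
/-- Let `G = ⟨a⟩` be cyclic of order `2^r`, `r ≥ 3` (realized additively as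
`ZMod (2^r)` with `a = 1`), and `S = {a, a², a^{2^{r-1}+1}} = {1, 2, 2^{r-1}+1}`.
Then `Cay(G,S)` is not a CI-digraph: there is `T ⊆ G` with `Cay(G,S) ≅ Cay(G,T)` as
digraphs, but `T ≠ S^σ` for every `σ ∈ Aut(G)`. -/
theorem stmt16 (r : ℕ) (hr : 3 ≤ r) :
    ∃ T : Set (ZMod (2 ^ r)),
      (∃ e : Equiv.Perm (ZMod (2 ^ r)), ∀ u v : ZMod (2 ^ r),
        cayArcAdd ({(1 : ZMod (2 ^ r)), 2, ((2 ^ (r - 1) + 1 : ℕ) : ZMod (2 ^ r))}) u v ↔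
        cayArcAdd T (e u) (e v)) ∧
      ∀ σ : AddAut (ZMod (2 ^ r)),
        (⇑σ) '' ({(1 : ZMod (2 ^ r)), 2, ((2 ^ (r - 1) + 1 : ℕ) : ZMod (2 ^ r))}) ≠ T := by
  obtain ⟨k, rfl⟩ : ∃ k, r = k + 3 := ⟨r - 3, by omega⟩
  have hS : ({1, 2, ((2 ^ (k + 3 - 1) + 1 : ℕ) : ZMod (2 ^ (k + 3)))} : Set _) = S k := by
    simp [S, half]
  rw [hS]
  refine ⟨T k, ⟨(twistMod4_involutive k).toPerm, ?_⟩, fun σ => ?_⟩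
  · exact cayArcAdd_iff_of_involutive (twistMod4_involutive k) (exists_twistMod4_add_S k)
      (exists_twistMod4_add_T k)
  · exact image_ne_of_forall_add_self_notMem σ (a := 1) (by simp [S])
      (by simp [S, one_add_one_eq_two]) (add_self_notMem_T k)
end
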